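/- arXiv:1811.04690 — 3 statements merged into one kernel-verified Lean document; each statement's English description precedes it below -/
import Mathlib

section
/- Let G = (S, 𝓕) be an arbitrary greedoid and w : 𝓛(𝓕) → ℝ an objective function on feasible orderings. Assume that whenever (a_1, …, a_i, x) is a feasible ordering of a set A ∪ {x} ∈ 𝓕 (with A = {a_1,…,a_i}, i = 0 possible) such that w((a_1,…,a_i,x)) ≥ w((a_1,…,a_i,y)) for every y ∈ Γ(A), the following two conditions hold: (1) w((a_1,…,a_i,b_1,…,b_j,x,c_1,…,c_k)) ≥ w((a_1,…,a_i,b_1,…,b_j,z,c_1,…,c_k)) whenever both strings are in 𝓛(𝓕); (2) w((a_1,…,a_i,x,b_1,…,b_j,z,c_1,…,c_k)) ≥ w((a_1,…,a_i,z,b_1,…,b_j,x,c_1,…,c_k)) whenever both strings are in 𝓛(𝓕). Then every ordering produced by the greedy algorithm is a feasible ordering of a base of G that maximizes w over all feasible orderings of bases. -/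
open Finset

variable {α : Type*} [DecidableEq α] [Fintype α]

/-- `X` is subfeasible: contained in some feasible set. -/
def Subfeasible (F : Set (Finset α)) (X : Finset α) : Prop :=
  ∃ Y ∈ F, X ⊆ Y

/-- Greedoid axioms: `∅` is feasible, and the exchange property. -/
def IsGreedoid (F : Set (Finset α)) : Prop :=
  (∅ : Finset α) ∈ F ∧
    ∀ X ∈ F, ∀ Y ∈ F, X.card < Y.card → ∃ y ∈ Y, y ∉ X ∧ insert y X ∈ F

/-- Local union property. -/
def LocalUnion (F : Set (Finset α)) : Prop :=
  ∀ A ∈ F, ∀ B ∈ F, Subfeasible F (A ∪ B) → A ∪ B ∈ F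

/-- Local intersection property. -/
def LocalInter (F : Set (Finset α)) : Prop :=
  ∀ A ∈ F, ∀ B ∈ F, Subfeasible F (A ∪ B) → A ∩ B ∈ F

/-- Local forest property. -/
def LocalForest (F : Set (Finset α)) : Prop :=
  ∀ A ∈ F, ∀ x y z : α,
    insert x A ∈ F → insert y A ∈ F → insert x (insert y A) ∈ F →
      insert z (insert x (insert y A)) ∈ F →
      insert z (insert x A) ∈ F ∨ insert z (insert y A) ∈ F

/-- The rank function of a greedoid: max cardinality of a feasible subset. -/
noncomputable def grank (F : Set (Finset α)) (A : Finset α) : ℕ :=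
  sSup {n : ℕ | ∃ X ∈ F, X ⊆ A ∧ X.card = n}

/-- A base: a feasible set of maximum size. -/
def IsBase (F : Set (Finset α)) (B : Finset α) : Prop :=
  B ∈ F ∧ ∀ C ∈ F, C.card ≤ B.card

/-- The set of continuations of a feasible set `A`. -/
def Gamma (F : Set (Finset α)) (A : Finset α) : Set α :=
  {x | x ∉ A ∧ insert x A ∈ F}

/-- `P` is the `x`-path in `A`: the unique inclusion-minimal feasible subset
of `A` containing `x`. -/
def IsPathIn (F : Set (Finset α)) (A : Finset α) (x : α) (P : Finset α) : Prop :=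
  P ∈ F ∧ P ⊆ A ∧ x ∈ P ∧ ∀ Q ∈ F, Q ⊆ A → x ∈ Q → P ⊆ Q

/-- `P` is a path. -/
def IsPath (F : Set (Finset α)) (P : Finset α) : Prop :=
  ∃ A ∈ F, ∃ x ∈ A, IsPathIn F A x P

/-- `l` is a feasible ordering (of the set of its elements): every prefix is feasible. -/
def FeasibleOrdering (F : Set (Finset α)) (l : List α) : Prop :=
  l.Nodup ∧ ∀ i : ℕ, (l.take i).toFinset ∈ F

/-- `B` is a greedy base for maximizing `w`. -/
def GreedyMaxBase (F : Set (Finset α)) (w : Finset α → ℝ) (B : Finset α) : Prop :=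
  IsBase F B ∧ ∃ l : List α, FeasibleOrdering F l ∧ l.toFinset = B ∧
    ∀ (i : ℕ) (hi : i < l.length), ∀ y ∈ Gamma F (l.take i).toFinset,
      w (insert y (l.take i).toFinset) ≤ w (insert (l.get ⟨i, hi⟩) (l.take i).toFinset)

/-- `B` is a greedy base for minimizing `w`. -/
def GreedyMinBase (F : Set (Finset α)) (w : Finset α → ℝ) (B : Finset α) : Prop :=
  IsBase F B ∧ ∃ l : List α, FeasibleOrdering F l ∧ l.toFinset = B ∧
    ∀ (i : ℕ) (hi : i < l.length), ∀ y ∈ Gamma F (l.take i).toFinset,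
      w (insert (l.get ⟨i, hi⟩) (l.take i).toFinset) ≤ w (insert y (l.take i).toFinset)

/-- The shadow vector of a feasible set `B`: `sh_B(x) = |B| - r(B \ {x})`. -/
noncomputable def shVec (F : Set (Finset α)) (B : Finset α) : α → ℝ :=
  fun x => (B.card : ℝ) - (grank F (B.erase x) : ℝ)

/-!
Let `m` be a feasible ordering of a base agreeing with the greedy ordering `g` in its first `k`
entries, and let `x` be the `k`-th greedy choice. Walking along `m` and using the exchange axiom,
one finds an entry `z` of `m`, at position at least `k` and before `x` (anywhere, if `x ∉ m`),
such that replacing `z` by `x` keeps every prefix feasible. Condition (1) shows that `x` is still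
a best continuation at the position of `z`; so replacing `z` by `x` (if `x ∉ m`) or swapping `z`
and `x` does not decrease `w`, by (1) resp. (2). This moves `x` strictly forward, and once it
reaches position `k` the ordering agrees with `g` in `k + 1` entries. By induction on `k`,
`w m ≤ w g`.
-/

section GreedyOrderings

variable {α : Type*}

theorem List.IsPrefix.isPrefix_or_eq_append {p l₁ l₂ : List α} (h : p <+: l₁ ++ l₂) :
    p <+: l₁ ∨ ∃ t, t <+: l₂ ∧ p = l₁ ++ t := by
  refine (List.prefix_or_prefix_of_prefix h (List.prefix_append l₁ l₂)).imp_right ?_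
  rintro ⟨t, rfl⟩
  exact ⟨t, (List.prefix_append_right_inj l₁).mp h, rfl⟩

variable [DecidableEq α] {F : Set (Finset α)}

namespace FeasibleOrdering

variable {l p : List α}

theorem iff_isPrefix :
    FeasibleOrdering F l ↔ l.Nodup ∧ ∀ p, p <+: l → p.toFinset ∈ F := by
  refine ⟨fun h => ⟨h.1, fun p hp => ?_⟩,
    fun h => ⟨h.1, fun i => h.2 _ (l.take_prefix i)⟩⟩
  rw [List.prefix_iff_eq_take.mp hp]
  exact h.2 _

theorem of_isPrefix (h : FeasibleOrdering F l) (hp : p <+: l) : FeasibleOrdering F p :=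
  iff_isPrefix.mpr ⟨hp.nodup h.1, fun _ hq => (iff_isPrefix.mp h).2 _ (hq.trans hp)⟩

theorem toFinset_mem (h : FeasibleOrdering F l) : l.toFinset ∈ F :=
  (iff_isPrefix.mp h).2 l (List.prefix_refl l)

theorem append_singleton {a : α} (h : FeasibleOrdering F l) (ha : a ∈ Gamma F l.toFinset) :
    FeasibleOrdering F (l ++ [a]) := by
  refine iff_isPrefix.mpr ⟨?_, fun p hp => ?_⟩
  · exact List.nodup_append.mpr ⟨h.1, List.nodup_singleton a,
      by simpa using fun b hb hab => ha.1 (List.mem_toFinset.mpr (by rwa [hab] at hb))⟩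
  rcases List.prefix_concat_iff.mp hp with rfl | hp
  · simpa [List.toFinset_append, Finset.union_comm] using ha.2
  · exact (iff_isPrefix.mp h).2 p hp

theorem swap {l b c : List α} {x z : α} (h : FeasibleOrdering F (l ++ z :: b ++ x :: c))
    (hx : FeasibleOrdering F (l ++ x :: b)) : FeasibleOrdering F (l ++ x :: b ++ z :: c) := by
  have hperm : (l ++ x :: b ++ z :: c).Perm (l ++ z :: b ++ x :: c) := by
    simp only [List.append_assoc, List.cons_append]
    refine List.Perm.append_left l ?_
    exact (List.perm_middle.cons x).trans ((List.Perm.swap z x _).trans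
      (List.perm_middle.symm.cons z))
  refine iff_isPrefix.mpr ⟨hperm.nodup_iff.mpr h.1, fun p hp => ?_⟩
  rcases hp.isPrefix_or_eq_append with hp | ⟨t, ht, rfl⟩
  · exact (iff_isPrefix.mp hx).2 p hp
  rcases List.prefix_cons_iff.mp ht with rfl | ⟨c', rfl, hc'⟩
  · simpa using hx.toFinset_mem
  have hset : (l ++ x :: b ++ z :: c').toFinset = (l ++ z :: b ++ x :: c').toFinset := by
    ext a; simp only [List.mem_toFinset, List.mem_append, List.mem_cons]; tauto
  rw [hset]
  exact (iff_isPrefix.mp h).2 _ (by simpa using hc')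

theorem exists_replace (hG : IsGreedoid F) {p : List α} {x : α}
    (hpx : FeasibleOrdering F (p ++ [x])) (t : List α) (ht : t ≠ [])
    (hpt : FeasibleOrdering F (p ++ t)) (hx : x ∉ p ++ t) :
    ∃ l z b, p <+: l ∧ l ++ z :: b = p ++ t ∧ FeasibleOrdering F (l ++ x :: b) := by
  induction t using List.reverseRecOn with
  | nil => exact absurd rfl ht
  | append_singleton t v ih =>
    rcases eq_or_ne t [] with rfl | ht'
    · exact ⟨p, v, [], List.prefix_refl p, by simp, by simpa using hpx⟩
    rw [← List.append_assoc] at hpt hx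
    have hq := hpt.of_isPrefix (List.prefix_append _ _)
    obtain ⟨l, z, b, hpl, hlzb, hlxb⟩ :=
      ih ht' hq (fun h => hx (List.mem_append_left _ h))
    have hcard : (l ++ x :: b).toFinset.card < (p ++ t ++ [v]).toFinset.card := by
      rw [List.toFinset_card_of_nodup hlxb.1, List.toFinset_card_of_nodup hpt.1, ← hlzb]
      simp
    obtain ⟨u, hu, hub, huF⟩ := hG.2 _ hlxb.toFinset_mem _ hpt.toFinset_mem hcard
    rw [List.mem_toFinset, List.mem_append, ← hlzb, List.mem_singleton] at hu
    -- the element supplied by the exchange axiom is either the replaced `z` or the new entry `v`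
    rcases hu with hu | rfl
    · have huz : u = z := by
        simp only [List.mem_append, List.mem_cons, List.mem_toFinset] at hu hub
        tauto
      subst huz
      refine ⟨p ++ t, v, [], List.prefix_append _ _, by simp, ?_⟩
      refine hq.append_singleton
        ⟨fun h => hx (List.mem_append_left _ (List.mem_toFinset.mp h)), ?_⟩
      convert huF using 1
      ext a
      simp only [← hlzb, Finset.mem_insert, List.mem_toFinset, List.mem_append, List.mem_cons]
      tauto
    · refine ⟨l, z, b ++ [u], hpl, by rw [← List.append_assoc, ← hlzb]; simp, ?_⟩
      simpa using hlxb.append_singleton ⟨hub, huF⟩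

end FeasibleOrdering

def IsGreedyChoice (F : Set (Finset α)) (w : List α → ℝ) (l : List α) (x : α) : Prop :=
  FeasibleOrdering F (l ++ [x]) ∧ ∀ y ∈ Gamma F l.toFinset, w (l ++ [y]) ≤ w (l ++ [x])

def KorteLovaszCondition (F : Set (Finset α)) (w : List α → ℝ) : Prop :=
  ∀ l x, IsGreedyChoice F w l x →
    (∀ b c z, FeasibleOrdering F (l ++ b ++ [x] ++ c) →
      FeasibleOrdering F (l ++ b ++ [z] ++ c) →
      w (l ++ b ++ [z] ++ c) ≤ w (l ++ b ++ [x] ++ c)) ∧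
    (∀ b c z, FeasibleOrdering F (l ++ [x] ++ b ++ [z] ++ c) →
      FeasibleOrdering F (l ++ [z] ++ b ++ [x] ++ c) →
      w (l ++ [z] ++ b ++ [x] ++ c) ≤ w (l ++ [x] ++ b ++ [z] ++ c))

namespace IsGreedyChoice

variable {w : List α → ℝ} {p : List α} {x : α}

theorem of_isPrefix (hKL : KorteLovaszCondition F w) (h : IsGreedyChoice F w p x) {l : List α}
    (hpl : p <+: l) (hl : FeasibleOrdering F (l ++ [x])) : IsGreedyChoice F w l x := by
  obtain ⟨b, rfl⟩ := hpl
  refine ⟨hl, fun u hu => ?_⟩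
  have hlu := (hl.of_isPrefix (List.prefix_append _ _)).append_singleton hu
  simpa using (hKL p x h).1 b [] u (by simpa using hl) (by simpa using hlu)

theorem exists_ge_of_mem (hG : IsGreedoid F) (hKL : KorteLovaszCondition F w)
    (h : IsGreedyChoice F w p x) (q c : List α) (hy : FeasibleOrdering F (q ++ x :: c))
    (hpq : p <+: q) :
    ∃ y, FeasibleOrdering F y ∧ y.length = (q ++ x :: c).length ∧ p ++ [x] <+: y ∧
      w (q ++ x :: c) ≤ w y := by
  induction hn : q.length using Nat.strong_induction_on generalizing q c with
  | _ n ih =>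
  obtain ⟨t, rfl⟩ := hpq
  rcases eq_or_ne t [] with rfl | ht
  · exact ⟨_, hy, rfl, by simp, le_rfl⟩
  have hx : x ∉ p ++ t := fun hmem =>
    (List.nodup_append.mp hy.1).2.2 x hmem x List.mem_cons_self rfl
  obtain ⟨l, z, b, hpl, hlzb, hlxb⟩ :=
    FeasibleOrdering.exists_replace hG h.1 t ht (hy.of_isPrefix (List.prefix_append _ _)) hx
  rw [← hlzb] at hy ⊢
  have hl : IsGreedyChoice F w l x :=
    h.of_isPrefix hKL hpl (hlxb.of_isPrefix (by simp))
  have hswap := hy.swap hlxb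
  have hle := (hKL l x hl).2 b c z (by simpa using hswap) (by simpa using hy)
  obtain ⟨y, hy', hlen, hpy, hwy⟩ :=
    ih l.length (by rw [← hn, ← hlzb]; simp) l (b ++ z :: c) (by simpa using hswap) hpl rfl
  exact ⟨y, hy', by simp [hlen], hpy, by simp at hle hwy ⊢; linarith⟩

theorem exists_ge (hG : IsGreedoid F) (hKL : KorteLovaszCondition F w)
    (h : IsGreedyChoice F w p x) {y : List α} (hy : FeasibleOrdering F y) (hpy : p <+: y)
    (hlen : p.length < y.length) :
    ∃ y', FeasibleOrdering F y' ∧ y'.length = y.length ∧ p ++ [x] <+: y' ∧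
      w y ≤ w y' := by
  by_cases hxy : x ∈ y
  · obtain ⟨q, c, rfl⟩ := List.append_of_mem hxy
    refine h.exists_ge_of_mem hG hKL q c hy ?_
    rcases hpy.isPrefix_or_eq_append with hpq | ⟨t, ht, rfl⟩
    · exact hpq
    rcases List.prefix_cons_iff.mp ht with rfl | ⟨t, rfl, -⟩
    · simp
    · exact absurd rfl ((List.nodup_append.mp h.1.1).2.2 x (by simp) x (by simp))
  obtain ⟨t, rfl⟩ := hpy
  have ht : t ≠ [] := by rintro rfl; simp at hlen
  obtain ⟨l, z, b, hpl, hlzb, hlxb⟩ := FeasibleOrdering.exists_replace hG h.1 t ht hy hxy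
  rw [← hlzb] at hy ⊢
  have hl : IsGreedyChoice F w l x := h.of_isPrefix hKL hpl (hlxb.of_isPrefix (by simp))
  have hle := (hKL l x hl).1 [] b z (by simpa using hlxb) (by simpa using hy)
  obtain ⟨y', hy', hlen', hpy', hwy'⟩ := h.exists_ge_of_mem hG hKL l b hlxb hpl
  exact ⟨y', hy', by simp [hlen'], hpy', by simp at hle; linarith⟩

end IsGreedyChoice

theorem exists_ge_of_isGreedyChoice_take (hG : IsGreedoid F) {w : List α → ℝ}
    (hKL : KorteLovaszCondition F w) {g m : List α}
    (hg : ∀ k (hk : k < g.length), IsGreedyChoice F w (g.take k) g[k])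
    (hm : FeasibleOrdering F m) (hlen : m.length = g.length) :
    ∀ k ≤ g.length, ∃ y, FeasibleOrdering F y ∧ y.length = g.length ∧ g.take k <+: y ∧
      w m ≤ w y
  | 0, _ => ⟨m, hm, hlen, by simp, le_rfl⟩
  | k + 1, hk => by
    obtain ⟨y, hy, hylen, hgy, hwy⟩ :=
      exists_ge_of_isGreedyChoice_take hG hKL hg hm hlen k (by omega)
    obtain ⟨y', hy', hylen', hgy', hwy'⟩ :=
      (hg k hk).exists_ge hG hKL hy hgy (by simp; omega)
    exact ⟨y', hy', by omega, by rwa [List.take_succ_eq_append_getElem hk], hwy.trans hwy'⟩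

theorem le_of_isGreedyChoice_take (hG : IsGreedoid F) {w : List α → ℝ}
    (hKL : KorteLovaszCondition F w) {g m : List α}
    (hg : ∀ k (hk : k < g.length), IsGreedyChoice F w (g.take k) g[k])
    (hm : FeasibleOrdering F m) (hlen : m.length = g.length) : w m ≤ w g := by
  obtain ⟨y, -, hylen, hgy, hwy⟩ :=
    exists_ge_of_isGreedyChoice_take hG hKL hg hm hlen g.length le_rfl
  rw [List.take_length] at hgy
  rwa [hgy.eq_of_length hylen.symm]

theorem isBase_of_gamma_eq_empty (hG : IsGreedoid F) {A : Finset α} (hA : A ∈ F)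
    (hΓ : Gamma F A = ∅) : IsBase F A := by
  refine ⟨hA, fun C hC => not_lt.mp fun hlt => ?_⟩
  obtain ⟨u, -, hu, huF⟩ := hG.2 A hA C hC hlt
  exact (Set.eq_empty_iff_forall_notMem.mp hΓ) u ⟨hu, huF⟩

end GreedyOrderings

/-- Korte–Lovász: optimality of the greedy algorithm for order-dependent
objective functions on greedoids. -/
theorem statement1 (F : Set (Finset α)) (hG : IsGreedoid F) (w : List α → ℝ)
    (hcond : ∀ (l : List α) (x : α), FeasibleOrdering F (l ++ [x]) →
      (∀ y ∈ Gamma F l.toFinset, w (l ++ [y]) ≤ w (l ++ [x])) →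
      ((∀ (b c : List α) (z : α),
          FeasibleOrdering F (l ++ b ++ [x] ++ c) →
          FeasibleOrdering F (l ++ b ++ [z] ++ c) →
          w (l ++ b ++ [z] ++ c) ≤ w (l ++ b ++ [x] ++ c)) ∧
       (∀ (b c : List α) (z : α),
          FeasibleOrdering F (l ++ [x] ++ b ++ [z] ++ c) →
          FeasibleOrdering F (l ++ [z] ++ b ++ [x] ++ c) →
          w (l ++ [z] ++ b ++ [x] ++ c) ≤ w (l ++ [x] ++ b ++ [z] ++ c))))
    -- `g` is an ordering produced by the greedy algorithm:
    (g : List α) (hgf : FeasibleOrdering F g)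
    (hgstop : Gamma F g.toFinset = ∅)
    (hggreedy : ∀ (i : ℕ) (hi : i < g.length), ∀ y ∈ Gamma F (g.take i).toFinset,
      w (g.take i ++ [y]) ≤ w (g.take i ++ [g.get ⟨i, hi⟩])) :
    IsBase F g.toFinset ∧
      ∀ m : List α, FeasibleOrdering F m → IsBase F m.toFinset → w m ≤ w g := by
  have hKL : KorteLovaszCondition F w := fun l x hx => hcond l x hx.1 hx.2
  have hg : ∀ k (hk : k < g.length), IsGreedyChoice F w (g.take k) g[k] := fun k hk =>
    ⟨List.take_succ_eq_append_getElem hk ▸ hgf.of_isPrefix (g.take_prefix (k + 1)),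
      fun y hy => by simpa only [List.get_eq_getElem] using hggreedy k hk y hy⟩
  have hbase := isBase_of_gamma_eq_empty hG hgf.toFinset_mem hgstop
  refine ⟨hbase, fun m hm hmb => le_of_isGreedyChoice_take hG hKL hg hm ?_⟩
  rw [← List.toFinset_card_of_nodup hm.1, ← List.toFinset_card_of_nodup hgf.1]
  exact le_antisymm (hbase.2 _ hmb.1) (hmb.2 _ hbase.1)
end

section
/- A greedoid G = (S, 𝓕) satisfying the local supermodularity property — r(A) + r(B) ≤ r(A ∪ B) + r(A ∩ B) for all A, B ⊆ S with A ∪ B subfeasible — is a local poset greedoid, i.e., it satisfies both the local union property and the local intersection property. -/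
set_option linter.unusedSectionVars false


open Finset

variable {α : Type*} [DecidableEq α] [Fintype α]

lemma grank_nonempty (F : Set (Finset α)) (hF : (∅ : Finset α) ∈ F) (A : Finset α) :
    {n : ℕ | ∃ X ∈ F, X ⊆ A ∧ X.card = n}.Nonempty :=
  ⟨0, ∅, hF, Finset.empty_subset _, Finset.card_empty⟩

lemma grank_le_card (F : Set (Finset α)) (hF : (∅ : Finset α) ∈ F) (A : Finset α) :
    grank F A ≤ A.card := by
  apply csSup_le (grank_nonempty F hF A)
  rintro n ⟨X, _, hXA, rfl⟩
  exact Finset.card_le_card hXA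

lemma card_le_grank (F : Set (Finset α)) {X A : Finset α} (hX : X ∈ F) (hXA : X ⊆ A) :
    X.card ≤ grank F A := by
  apply le_csSup
  · exact ⟨A.card, by rintro n ⟨Y, _, hYA, rfl⟩; exact Finset.card_le_card hYA⟩
  · exact ⟨X, hX, hXA, rfl⟩

lemma feasible_of_grank_eq (F : Set (Finset α)) (hF : (∅ : Finset α) ∈ F) {A : Finset α}
    (h : grank F A = A.card) : A ∈ F := by
  have hmem : grank F A ∈ {n : ℕ | ∃ X ∈ F, X ⊆ A ∧ X.card = n} :=
    Nat.sSup_mem (grank_nonempty F hF A)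
      ⟨A.card, by rintro n ⟨Y, _, hYA, rfl⟩; exact Finset.card_le_card hYA⟩
  obtain ⟨X, hXF, hXA, hcard⟩ := hmem
  have : X = A := Finset.eq_of_subset_of_card_le hXA (by omega)
  exact this ▸ hXF

/-- A greedoid satisfying the local supermodularity property is a local poset
greedoid (it satisfies the local union and local intersection properties). -/
theorem statement6 (F : Set (Finset α)) (hG : IsGreedoid F)
    (hsup : ∀ A B : Finset α, Subfeasible F (A ∪ B) →
      grank F A + grank F B ≤ grank F (A ∪ B) + grank F (A ∩ B)) :
    LocalUnion F ∧ LocalInter F := by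
  have hF := hG.1
  have key : ∀ A ∈ F, ∀ B ∈ F, Subfeasible F (A ∪ B) →
      grank F (A ∪ B) = (A ∪ B).card ∧ grank F (A ∩ B) = (A ∩ B).card := by
    intro A hA B hB hsub
    have h1 := hsup A B hsub
    have hA' : A.card ≤ grank F A := card_le_grank F hA (Finset.Subset.refl A)
    have hB' : B.card ≤ grank F B := card_le_grank F hB (Finset.Subset.refl B)
    have hu : grank F (A ∪ B) ≤ (A ∪ B).card := grank_le_card F hF _
    have hi : grank F (A ∩ B) ≤ (A ∩ B).card := grank_le_card F hF _
    have hcard : (A ∪ B).card + (A ∩ B).card = A.card + B.card :=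
      Finset.card_union_add_card_inter A B
    constructor <;> omega
  constructor
  · intro A hA B hB hsub
    obtain ⟨h, _⟩ := key A hA B hB hsub
    exact feasible_of_grank_eq F hF h
  · intro A hA B hB hsub
    obtain ⟨_, h⟩ := key A hA B hB hsub
    exact feasible_of_grank_eq F hF h
end

section
/- Let G = (S, 𝓕) be a local poset greedoid with rank function r, P_shadow(G) its shadow polytope, and Q = { x ∈ ℝ^S : x(U) ≥ r(S) − r(S \ U) for all U ⊆ S }, where x(U) = Σ_{s ∈ U} x(s). Then the up-hull of P_shadow(G) is contained in Q. -/
open Finset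

variable {α : Type*} [DecidableEq α] [Fintype α]

lemma grank_bddAbove (F : Set (Finset α)) (A : Finset α) :
    BddAbove {n : ℕ | ∃ X ∈ F, X ⊆ A ∧ X.card = n} := by
  refine ⟨A.card, ?_⟩
  rintro n ⟨X, hX, hXA, rfl⟩
  exact Finset.card_le_card hXA

lemma le_grank {F : Set (Finset α)} {A X : Finset α} (hX : X ∈ F) (hXA : X ⊆ A) :
    X.card ≤ grank F A :=
  le_csSup (grank_bddAbove F A) ⟨X, hX, hXA, rfl⟩

lemma grank_spec {F : Set (Finset α)} (h0 : (∅ : Finset α) ∈ F) (A : Finset α) :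
    ∃ X ∈ F, X ⊆ A ∧ X.card = grank F A := by
  have hne : {n : ℕ | ∃ X ∈ F, X ⊆ A ∧ X.card = n}.Nonempty :=
    ⟨0, ∅, h0, Finset.empty_subset A, rfl⟩
  exact Nat.sSup_mem hne (grank_bddAbove F A)

lemma shadow_key {F : Set (Finset α)} (hG : IsGreedoid F) (hI : LocalInter F)
    {B : Finset α} (hB : IsBase F B) (U : Finset α) :
    ∃ I ∈ F, I ⊆ B ∧ (∀ s ∈ U, s ∉ I) ∧
      B.card ≤ I.card + ∑ s ∈ U, (B.card - grank F (B.erase s)) := by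
  induction U using Finset.induction with
  | empty => exact ⟨B, hB.1, subset_rfl, by simp, by simp⟩
  | @insert a U ha IH =>
    obtain ⟨I, hIF, hIB, hIU, hcard⟩ := IH
    obtain ⟨X, hXF, hXsub, hXcard⟩ := grank_spec hG.1 (B.erase a)
    have hXB : X ⊆ B := hXsub.trans (Finset.erase_subset _ _)
    have hsub : Subfeasible F (I ∪ X) := ⟨B, hB.1, Finset.union_subset hIB hXB⟩
    have hIX : I ∩ X ∈ F := hI I hIF X hXF hsub
    refine ⟨I ∩ X, hIX, Finset.inter_subset_left.trans hIB, ?_, ?_⟩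
    · intro s hs hsIX
      rcases Finset.mem_insert.mp hs with rfl | hsU
      · exact (Finset.notMem_erase s B) (hXsub (Finset.mem_inter.mp hsIX).2)
      · exact hIU s hsU (Finset.mem_inter.mp hsIX).1
    · rw [Finset.sum_insert ha, ← hXcard]
      have h2 : (B \ X).card = B.card - X.card := Finset.card_sdiff_of_subset hXB
      have h1 : (I \ X).card ≤ (B \ X).card :=
        Finset.card_le_card (Finset.sdiff_subset_sdiff hIB subset_rfl)
      have h3 : (I ∩ X).card + (I \ X).card = I.card := Finset.card_inter_add_card_sdiff I X
      have h4 : X.card ≤ B.card := Finset.card_le_card hXB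
      omega

lemma shadow_ineq {F : Set (Finset α)} (hG : IsGreedoid F) (hI : LocalInter F)
    {B : Finset α} (hB : IsBase F B) (U : Finset α) :
    (grank F Finset.univ : ℝ) - (grank F (Finset.univ \ U) : ℝ) ≤ ∑ s ∈ U, shVec F B s := by
  obtain ⟨I, hIF, hIB, hIU, hcard⟩ := shadow_key hG hI hB U
  have hIsub : I ⊆ Finset.univ \ U := fun t ht =>
    Finset.mem_sdiff.mpr ⟨Finset.mem_univ t, fun htU => hIU t htU ht⟩
  have h1 : I.card ≤ grank F (Finset.univ \ U) := le_grank hIF hIsub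
  have hrU : grank F (Finset.univ : Finset α) = B.card := by
    apply le_antisymm
    · obtain ⟨X, hXF, hXsub, hXcard⟩ := grank_spec hG.1 (Finset.univ : Finset α)
      rw [← hXcard]; exact hB.2 X hXF
    · exact le_grank hB.1 (Finset.subset_univ B)
  have hns : ∀ s : α, grank F (B.erase s) ≤ B.card := by
    intro s
    obtain ⟨X, hXF, hXsub, hXcard⟩ := grank_spec hG.1 (B.erase s)
    rw [← hXcard]
    exact Finset.card_le_card (hXsub.trans (Finset.erase_subset _ _))
  have hsum : (↑(∑ s ∈ U, (B.card - grank F (B.erase s))) : ℝ) = ∑ s ∈ U, shVec F B s := by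
    rw [Nat.cast_sum]
    refine Finset.sum_congr rfl fun s _ => ?_
    rw [Nat.cast_sub (hns s)]
    rfl
  have hcR : (B.card : ℝ) ≤ (I.card : ℝ) + ∑ s ∈ U, shVec F B s := by
    rw [← hsum]
    exact_mod_cast hcard
  have h1R : (I.card : ℝ) ≤ (grank F (Finset.univ \ U) : ℝ) := by exact_mod_cast h1
  rw [hrU]
  linarith

/-- For a local poset greedoid, the up-hull of the shadow polytope is contained
in `Q = {x : x(U) ≥ r(S) - r(S \ U) for all U ⊆ S}`. -/
theorem statement8 (F : Set (Finset α)) (hG : IsGreedoid F)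
    (hU : LocalUnion F) (hI : LocalInter F) :
    {x : α → ℝ | ∃ z ∈ convexHull ℝ
        {v : α → ℝ | ∃ B : Finset α, IsBase F B ∧ v = shVec F B}, z ≤ x} ⊆
    {x : α → ℝ | ∀ U : Finset α,
      (grank F Finset.univ : ℝ) - (grank F (Finset.univ \ U) : ℝ) ≤ ∑ s ∈ U, x s} := by
  rintro x ⟨z, hz, hzx⟩ U
  have hconv : Convex ℝ {v : α → ℝ |
      (grank F Finset.univ : ℝ) - (grank F (Finset.univ \ U) : ℝ) ≤ ∑ s ∈ U, v s} :=
    convex_halfSpace_ge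
      ⟨fun a b => by simp [Finset.sum_add_distrib], fun c a => by simp [Finset.mul_sum]⟩ _
  have hsubset : {v : α → ℝ | ∃ B : Finset α, IsBase F B ∧ v = shVec F B} ⊆
      {v : α → ℝ | (grank F Finset.univ : ℝ) - (grank F (Finset.univ \ U) : ℝ) ≤ ∑ s ∈ U, v s} := by
    rintro v ⟨B, hB, rfl⟩
    exact shadow_ineq hG hI hB U
  have hzU : (grank F Finset.univ : ℝ) - (grank F (Finset.univ \ U) : ℝ) ≤ ∑ s ∈ U, z s :=
    convexHull_min hsubset hconv hz
  have hxz : ∑ s ∈ U, z s ≤ ∑ s ∈ U, x s := Finset.sum_le_sum fun i _ => hzx i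
  linarith
end
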